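/- Let t = g(w) = (a, b) be a node of the Stern–Brocot tree with a ≥ 2 and b ≥ 2 (equivalently, t does not lie on either branch emanating from the root, so that its parents t⁺ = g⁺(w) and t⁻ = g⁻(w) are themselves pairs of coprime positive integers). Then τ(t) = τ(t⁺) · r · u · τ(t⁻) = τ(t⁻) · u · r · τ(t⁺), where · denotes concatenation of words. -/

import Mathlib

/-- The alphabet `{r, u}` of cube rolls: `r` = right roll, `u` = up roll. -/
inductive Letter
  | r : Letter
  | u : Letter
  deriving DecidableEq

/-- The times `t ∈ (0,1)` at which the segment `t ↦ (t·a, t·b)` crosses a grid line: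
`t = k/a` (crossing the vertical line `x = k`) for `1 ≤ k ≤ a−1`, and `t = i/b`
(crossing the horizontal line `y = i`) for `1 ≤ i ≤ b−1`. -/
def crossingTimes (a b : ℕ) : Finset ℚ :=
  ((Finset.Icc 1 (a - 1)).image fun k : ℕ => (k : ℚ) / (a : ℚ)) ∪
    ((Finset.Icc 1 (b - 1)).image fun i : ℕ => (i : ℚ) / (b : ℚ))

/-- The tumble sequence `τ(a,b)`: the word over `{r, u}` obtained by recording, in
increasing order of the crossing times `t` of the segment `t ↦ (t·a, t·b)`, a letter
`r` at each crossing `t = k/a` of a vertical line and a letter `u` at each crossing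
`t = i/b` of a horizontal line.  (For `gcd(a,b) = 1`, a crossing time `t` is of the
form `k/a` with `1 ≤ k ≤ a−1` exactly when `t·a` is an integer.) -/
def tumbleWord (a b : ℕ) : List Letter :=
  ((crossingTimes a b).sort (· ≤ ·)).map fun t =>
    if (t * (a : ℚ)).den = 1 then Letter.r else Letter.u

/-- One step of the Stern–Brocot recursion on triples `(g, g⁺, g⁻)`:
`true` (the letter `+`) sends `(g, g⁺, g⁻)` to `(g + g⁺, g⁺, g)`, and
`false` (the letter `−`) sends `(g, g⁺, g⁻)` to `(g + g⁻, g, g⁻)`. -/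
def sbStep : (ℕ × ℕ) × (ℕ × ℕ) × (ℕ × ℕ) → Bool → (ℕ × ℕ) × (ℕ × ℕ) × (ℕ × ℕ)
  | (g, gp, _gm), true => (g + gp, gp, g)
  | (g, _gp, gm), false => (g + gm, g, gm)

/-- The Stern–Brocot triple `(g(w), g⁺(w), g⁻(w))` of the node indexed by the word `w`
over `{+, −}` (`true` = `+`, `false` = `−`), starting from
`(g(ε), g⁺(ε), g⁻(ε)) = ((1,1), (0,1), (1,0))`. -/
def sb (w : List Bool) : (ℕ × ℕ) × (ℕ × ℕ) × (ℕ × ℕ) :=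
  w.foldl sbStep ((1, 1), (0, 1), (1, 0))

/-!
Write `(a, b) = (p + p', q + q')` for the node and `(p, q)`, `(p', q')` for its parents, so that
`q p' - p q' = 1`. The vertical crossing `k/a` precedes the horizontal crossing `i/b` iff the
lattice point `(k, i)` lies above the line through `0` and `(a, b)`. The triangle with vertices
`0`, `(p, q)`, `(a, b)` has area `1/2`, hence contains no lattice points besides its vertices. So
for `k < p` this is decided as for the segment to `(p, q)`, and for `k > p` as for the segment
from `(p, q)` to `(a, b)`, i.e. for the segment to `(p', q')` shifted by `(p, q)`. Thus the
crossings before `t = p/a` spell `τ(p, q)`, those after `t = q/b` spell `τ(p', q')`, and in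
between lie only the crossings of `x = p` and `y = q`. The reflection `t ↦ 1 - t` makes every
tumble word a palindrome, and reversing the first factorisation gives the second.
-/

theorem Nat.coprime_of_mul_eq_mul_add_one {x y z w : ℕ} (h : x * y = z * w + 1) :
    Nat.Coprime y w :=
  Nat.isCoprime_iff_coprime.mp
    ⟨x, -z, by linear_combination (by exact_mod_cast h : (x * y : ℤ) = z * w + 1)⟩

lemma natCast_div_lt_natCast_div_iff {x y z w : ℕ} (hy : 0 < y) (hw : 0 < w) :
    (x / y : ℚ) < z / w ↔ x * w < z * y := by
  rw [div_lt_div_iff₀ (by positivity) (by positivity)]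
  norm_cast

lemma Finset.pairwise_map_sort_of_strictMonoOn {α β : Type*} [LinearOrder α] [Preorder β]
    {s : Finset α} {f : α → β} (hf : StrictMonoOn f s) :
    ((s.sort (· ≤ ·)).map f).Pairwise (· < ·) :=
  List.pairwise_map.2 <| (Finset.sortedLT_sort s).pairwise.imp_of_mem fun hx hy hxy =>
    hf (Finset.mem_sort _ |>.1 hx) (Finset.mem_sort _ |>.1 hy) hxy

lemma mem_crossingTimes {a b : ℕ} {t : ℚ} :
    t ∈ crossingTimes a b ↔
      (∃ k, 0 < k ∧ k < a ∧ (k / a : ℚ) = t) ∨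
        ∃ i, 0 < i ∧ i < b ∧ (i / b : ℚ) = t := by
  simp only [crossingTimes, Finset.mem_union, Finset.mem_image, Finset.mem_Icc]
  grind

lemma forall_mem_crossingTimes {a b : ℕ} {P : ℚ → Prop} :
    (∀ t ∈ crossingTimes a b, P t) ↔
      (∀ k, 0 < k → k < a → P (k / a)) ∧ ∀ i, 0 < i → i < b → P (i / b) := by
  simp only [mem_crossingTimes]
  grind

lemma one_sub_mem_crossingTimes {a b : ℕ} :
    ∀ t ∈ crossingTimes a b, 1 - t ∈ crossingTimes a b := by
  refine forall_mem_crossingTimes.2 ⟨fun k hk hka => ?_, fun i hi hib => ?_⟩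
  · refine mem_crossingTimes.2 (.inl ⟨a - k, by omega, by omega, ?_⟩)
    rw [Nat.cast_sub hka.le, sub_div, div_self (by norm_cast; omega)]
  · refine mem_crossingTimes.2 (.inr ⟨b - i, by omega, by omega, ?_⟩)
    rw [Nat.cast_sub hib.le, sub_div, div_self (by norm_cast; omega)]

def crossingLetter (a : ℕ) (t : ℚ) : Letter :=
  if (t * a).den = 1 then .r else .u

lemma tumbleWord_eq_map_sort (a b : ℕ) :
    tumbleWord a b = ((crossingTimes a b).sort (· ≤ ·)).map (crossingLetter a) := rfl

lemma crossingLetter_div_self (a k : ℕ) : crossingLetter a (k / a) = .r := by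
  rcases eq_or_ne a 0 with rfl | ha
  · simp [crossingLetter]
  · simp [crossingLetter, ha]

lemma crossingLetter_div_of_coprime {a b x : ℕ} (hba : Nat.Coprime b a) (hx : 0 < x)
    (hxb : x < b) : crossingLetter a (x / b) = .u := by
  have hndvd : ¬ b ∣ x * a := fun h =>
    Nat.not_dvd_of_pos_of_lt hx hxb (hba.dvd_of_dvd_mul_right h)
  rw [crossingLetter, if_neg]
  rwa [div_mul_eq_mul_div, ← Nat.cast_mul, Rat.den_div_natCast_eq_one_iff _ _ (by omega)]

lemma crossingLetter_one_sub (a : ℕ) (t : ℚ) :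
    crossingLetter a (1 - t) = crossingLetter a t := by
  rw [crossingLetter, crossingLetter, sub_mul, one_mul, Rat.natCast_sub_den]

theorem tumbleWord_reverse (a b : ℕ) : (tumbleWord a b).reverse = tumbleWord a b := by
  set l := (crossingTimes a b).sort (· ≤ ·)
  have hsorted := (Finset.sortedLT_sort (crossingTimes a b)).pairwise
  have hl : l.reverse = l.map (1 - ·) := by
    refine List.Pairwise.eq_of_mem_iff (r := (· > ·)) (List.pairwise_reverse.2 hsorted)
      (List.pairwise_map.2 (hsorted.imp fun h => by linarith)) fun t => ?_
    simp only [List.mem_reverse, List.mem_map, Finset.mem_sort, l]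
    exact ⟨fun ht => ⟨1 - t, one_sub_mem_crossingTimes t ht, sub_sub_cancel 1 t⟩,
      fun ⟨s, hs, hst⟩ => hst ▸ one_sub_mem_crossingTimes s hs⟩
  rw [tumbleWord_eq_map_sort, ← List.map_reverse, hl, List.map_map]
  exact List.map_congr_left fun t _ => crossingLetter_one_sub a t

/- Sends the crossing `k/p` of the segment to `(p, q)` with the line `x = k` to the crossing of
the segment to `(a, b)` with `x = k + m`, and likewise `i/q` to the crossing with `y = i + n`. -/
def shiftCrossing (p q a b m n : ℕ) (t : ℚ) : ℚ :=
  match crossingLetter p t with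
  | .r => (t * p + m) / a
  | .u => (t * q + n) / b

section shiftCrossing

variable {p q a b m n : ℕ}

lemma shiftCrossing_div_left {k : ℕ} (hp : p ≠ 0) :
    shiftCrossing p q a b m n (k / p) = ((k + m : ℕ) : ℚ) / a := by
  rw [shiftCrossing, crossingLetter_div_self, div_mul_cancel₀ _ (by exact_mod_cast hp)]
  push_cast; rfl

lemma shiftCrossing_div_right {i : ℕ} (hqp : Nat.Coprime q p) (hi : 0 < i) (hiq : i < q) :
    shiftCrossing p q a b m n (i / q) = ((i + n : ℕ) : ℚ) / b := by
  rw [shiftCrossing, crossingLetter_div_of_coprime hqp hi hiq,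
    div_mul_cancel₀ _ (by norm_cast; omega)]
  push_cast; rfl

lemma shiftCrossing_mem_crossingTimes (hqp : Nat.Coprime q p) (ha : p + m ≤ a)
    (hb : q + n ≤ b) :
    ∀ t ∈ crossingTimes p q, shiftCrossing p q a b m n t ∈ crossingTimes a b := by
  refine forall_mem_crossingTimes.2 ⟨fun k hk hkp => ?_, fun i hi hiq => ?_⟩
  · rw [shiftCrossing_div_left (by omega)]
    exact mem_crossingTimes.2 (.inl ⟨k + m, by omega, by omega, rfl⟩)
  · rw [shiftCrossing_div_right hqp hi hiq]
    exact mem_crossingTimes.2 (.inr ⟨i + n, by omega, by omega, rfl⟩)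

lemma crossingLetter_shiftCrossing (hqp : Nat.Coprime q p) (hba : Nat.Coprime b a)
    (hb : q + n ≤ b) :
    ∀ t ∈ crossingTimes p q,
      crossingLetter a (shiftCrossing p q a b m n t) = crossingLetter p t := by
  refine forall_mem_crossingTimes.2 ⟨fun k hk hkp => ?_, fun i hi hiq => ?_⟩
  · rw [shiftCrossing_div_left (by omega), crossingLetter_div_self, crossingLetter_div_self]
  · rw [shiftCrossing_div_right hqp hi hiq,
      crossingLetter_div_of_coprime hba (by omega) (by omega),
      crossingLetter_div_of_coprime hqp hi hiq]

lemma map_sort_shiftCrossing (hqp : Nat.Coprime q p) (hba : Nat.Coprime b a) (hb : q + n ≤ b) :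
    (((crossingTimes p q).sort (· ≤ ·)).map (shiftCrossing p q a b m n)).map
      (crossingLetter a) = tumbleWord p q := by
  rw [List.map_map, tumbleWord_eq_map_sort]
  exact List.map_congr_left fun t ht =>
    crossingLetter_shiftCrossing hqp hba hb t (Finset.mem_sort _ |>.1 ht)

lemma strictMonoOn_shiftCrossing (hqp : Nat.Coprime q p) (ha : 0 < a) (hb : 0 < b)
    (hcross : ∀ k i, 0 < k → k < p → 0 < i → i < q →
      (k * q < i * p → (k + m) * b < (i + n) * a) ∧
        (i * p < k * q → (i + n) * a < (k + m) * b)) :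
    StrictMonoOn (shiftCrossing p q a b m n) (crossingTimes p q) := by
  intro x hx y hy hxy
  rcases mem_crossingTimes.1 hx with ⟨k, hk, hkp, rfl⟩ | ⟨i, hi, hiq, rfl⟩ <;>
    rcases mem_crossingTimes.1 hy with ⟨k', hk', hk'p, rfl⟩ | ⟨i', hi', hi'q, rfl⟩
  · rw [shiftCrossing_div_left (by omega), shiftCrossing_div_left (by omega),
      natCast_div_lt_natCast_div_iff ha ha]
    rw [natCast_div_lt_natCast_div_iff (by omega) (by omega)] at hxy
    nlinarith
  · rw [shiftCrossing_div_left (by omega), shiftCrossing_div_right hqp hi' hi'q,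
      natCast_div_lt_natCast_div_iff ha hb]
    rw [natCast_div_lt_natCast_div_iff (by omega) (by omega)] at hxy
    exact (hcross k i' hk hkp hi' hi'q).1 hxy
  · rw [shiftCrossing_div_right hqp hi hiq, shiftCrossing_div_left (by omega),
      natCast_div_lt_natCast_div_iff hb ha]
    rw [natCast_div_lt_natCast_div_iff (by omega) (by omega)] at hxy
    exact (hcross k' i hk' hk'p hi hiq).2 hxy
  · rw [shiftCrossing_div_right hqp hi hiq, shiftCrossing_div_right hqp hi' hi'q,
      natCast_div_lt_natCast_div_iff hb hb]
    rw [natCast_div_lt_natCast_div_iff (by omega) (by omega)] at hxy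
    nlinarith

end shiftCrossing

section Mediant

variable {p q p' q' : ℕ}

lemma pos_of_det_eq_one (hdet : q * p' = p * q' + 1) : 0 < q ∧ 0 < p' :=
  CanonicallyOrderedAdd.mul_pos.1 (hdet ▸ Nat.succ_pos _)

lemma coprime_of_det_eq_one (hdet : q * p' = p * q' + 1) :
    q.Coprime p ∧ q'.Coprime p' ∧ (q + q').Coprime (p + p') :=
  ⟨Nat.coprime_of_mul_eq_mul_add_one (x := p') (z := q') (by linarith),
    (Nat.coprime_of_mul_eq_mul_add_one hdet).symm,
    Nat.coprime_of_mul_eq_mul_add_one (x := p') (z := q') (by linarith)⟩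

/- `hk` and `hi` are Cramer's rule in the unimodular basis `(p, q), (p', q')`: a point `(k, i)`
strictly between the rays through `(p, q)` and `(p + p', q + q')` would have `k ≥ p` or `i < 0`. -/
lemma crossing_order_mediant_left {k i : ℕ} (hdet : q * p' = p * q' + 1) (hkp : k < p) :
    (k * q < i * p → k * (q + q') < i * (p + p')) ∧
      (i * p < k * q → i * (p + p') < k * (q + q')) := by
  have hdet' : (q * p' : ℤ) = p * q' + 1 := by exact_mod_cast hdet
  have hi : (i : ℤ) = q * (i * p' - k * q') - q' * (i * p - k * q) := by
    linear_combination (-(i : ℤ)) * hdet'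
  have hk : (k : ℤ) = p * (i * p' - k * q') - p' * (i * p - k * q) := by
    linear_combination (-(k : ℤ)) * hdet'
  constructor <;> intro h <;> zify at h ⊢ <;> nlinarith

lemma crossing_order_mediant_right {k i : ℕ} (hdet : q * p' = p * q' + 1) (hkp : k < p') :
    (k * q' < i * p' → (k + p) * (q + q') < (i + q) * (p + p')) ∧
      (i * p' < k * q' → (i + q) * (p + p') < (k + p) * (q + q')) := by
  have hq := (pos_of_det_eq_one hdet).1
  have hdet' : (q * p' : ℤ) = p * q' + 1 := by exact_mod_cast hdet
  have hi : (i : ℤ) = (q + q') * (i * p' - k * q') - q' * (i * (p + p') - k * (q + q')) := by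
    linear_combination (-(i : ℤ)) * hdet'
  have hk : (k : ℤ) = (p + p') * (i * p' - k * q') - p' * (i * (p + p') - k * (q + q')) := by
    linear_combination (-(k : ℤ)) * hdet'
  constructor <;> intro h <;> zify at h hq ⊢ <;> nlinarith

lemma shiftCrossing_lt_div (hdet : q * p' = p * q' + 1) :
    ∀ t ∈ crossingTimes p q,
      shiftCrossing p q (p + p') (q + q') 0 0 t < (p / (p + p' : ℕ) : ℚ) := by
  have hqp := (coprime_of_det_eq_one hdet).1
  have hp' := (pos_of_det_eq_one hdet).2
  refine forall_mem_crossingTimes.2 ⟨fun k hk hkp => ?_, fun i hi hiq => ?_⟩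
  · rw [shiftCrossing_div_left (by omega), natCast_div_lt_natCast_div_iff (by omega) (by omega)]
    nlinarith
  · rw [shiftCrossing_div_right hqp hi hiq, natCast_div_lt_natCast_div_iff (by omega) (by omega)]
    nlinarith [Nat.mul_le_mul_right (p + p') (Nat.succ_le_of_lt hiq), Nat.mul_le_mul hi hp']

lemma div_lt_div_mediant (hp : 0 < p) (hdet : q * p' = p * q' + 1) :
    (p / (p + p' : ℕ) : ℚ) < q / (q + q' : ℕ) := by
  have hq := (pos_of_det_eq_one hdet).1
  rw [natCast_div_lt_natCast_div_iff (by omega) (by omega)]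
  nlinarith

lemma div_lt_shiftCrossing (hq' : 0 < q') (hdet : q * p' = p * q' + 1) :
    ∀ t ∈ crossingTimes p' q',
      (q / (q + q' : ℕ) : ℚ) < shiftCrossing p' q' (p + p') (q + q') p q t := by
  have hq'p' := (coprime_of_det_eq_one hdet).2.1
  have hq := (pos_of_det_eq_one hdet).1
  refine forall_mem_crossingTimes.2 ⟨fun k hk hkp => ?_, fun i hi hiq => ?_⟩
  · rw [shiftCrossing_div_left (by omega), natCast_div_lt_natCast_div_iff (by omega) (by omega)]
    nlinarith
  · rw [shiftCrossing_div_right hq'p' hi hiq,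
      natCast_div_lt_natCast_div_iff (by omega) (by omega)]
    nlinarith

def mediantCrossings (p q p' q' : ℕ) : List ℚ :=
  ((crossingTimes p q).sort (· ≤ ·)).map (shiftCrossing p q (p + p') (q + q') 0 0) ++
    (p / (p + p' : ℕ) : ℚ) :: (q / (q + q' : ℕ) : ℚ) ::
      ((crossingTimes p' q').sort (· ≤ ·)).map (shiftCrossing p' q' (p + p') (q + q') p q)

lemma pairwise_mediantCrossings (hp : 0 < p) (hq' : 0 < q') (hdet : q * p' = p * q' + 1) :
    (mediantCrossings p q p' q').Pairwise (· < ·) := by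
  obtain ⟨hqp, hq'p', -⟩ := coprime_of_det_eq_one hdet
  have hsorted₁ := Finset.pairwise_map_sort_of_strictMonoOn <|
    strictMonoOn_shiftCrossing (a := p + p') (b := q + q') (m := 0) (n := 0) hqp (by omega)
      (by omega) fun k i _ hkp _ _ => by simpa using crossing_order_mediant_left (i := i) hdet hkp
  have hsorted₂ := Finset.pairwise_map_sort_of_strictMonoOn <|
    strictMonoOn_shiftCrossing (a := p + p') (b := q + q') hq'p' (by omega) (by omega)
      fun k i _ hkp _ _ => crossing_order_mediant_right (i := i) hdet hkp
  have hlt₁ := shiftCrossing_lt_div hdet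
  have hmid := div_lt_div_mediant hp hdet
  have hlt₂ := div_lt_shiftCrossing hq' hdet
  simp only [mediantCrossings, List.pairwise_append, List.pairwise_cons, List.mem_cons,
    List.mem_map, Finset.mem_sort]
  refine ⟨hsorted₁, ⟨?_, ?_, hsorted₂⟩, ?_⟩
  · rintro _ (rfl | ⟨t, ht, rfl⟩)
    exacts [hmid, hmid.trans (hlt₂ t ht)]
  · rintro _ ⟨t, ht, rfl⟩
    exact hlt₂ t ht
  · rintro _ ⟨t, ht, rfl⟩ _ (rfl | rfl | ⟨s, hs, rfl⟩)
    exacts [hlt₁ t ht, (hlt₁ t ht).trans hmid, ((hlt₁ t ht).trans hmid).trans (hlt₂ s hs)]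

lemma mem_mediantCrossings (hp : 0 < p) (hq' : 0 < q') (hdet : q * p' = p * q' + 1) {t : ℚ} :
    t ∈ mediantCrossings p q p' q' ↔ t ∈ crossingTimes (p + p') (q + q') := by
  obtain ⟨hqp, hq'p', -⟩ := coprime_of_det_eq_one hdet
  obtain ⟨hq, hp'⟩ := pos_of_det_eq_one hdet
  simp only [mediantCrossings, List.mem_append, List.mem_cons, List.mem_map, Finset.mem_sort]
  constructor
  · rintro (⟨s, hs, rfl⟩ | rfl | rfl | ⟨s, hs, rfl⟩)
    · exact shiftCrossing_mem_crossingTimes hqp (by omega) (by omega) s hs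
    · exact mem_crossingTimes.2 (.inl ⟨p, hp, by omega, rfl⟩)
    · exact mem_crossingTimes.2 (.inr ⟨q, hq, by omega, rfl⟩)
    · exact shiftCrossing_mem_crossingTimes hq'p' (by omega) (by omega) s hs
  · intro ht
    rcases mem_crossingTimes.1 ht with ⟨k, hk, hka, rfl⟩ | ⟨i, hi, hib, rfl⟩
    · rcases lt_trichotomy k p with hkp | rfl | hpk
      · exact .inl ⟨k / p, mem_crossingTimes.2 (.inl ⟨k, hk, hkp, rfl⟩),
          shiftCrossing_div_left hp.ne'⟩
      · exact .inr (.inl rfl)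
      · obtain ⟨j, rfl⟩ := Nat.exists_eq_add_of_lt hpk
        refine .inr (.inr (.inr ⟨(j + 1 : ℕ) / p',
          mem_crossingTimes.2 (.inl ⟨j + 1, by omega, by omega, rfl⟩), ?_⟩))
        rw [shiftCrossing_div_left hp'.ne', add_comm (j + 1) p, add_assoc]
    · rcases lt_trichotomy i q with hiq | rfl | hqi
      · exact .inl ⟨i / q, mem_crossingTimes.2 (.inr ⟨i, hi, hiq, rfl⟩),
          shiftCrossing_div_right hqp hi hiq⟩
      · exact .inr (.inr (.inl rfl))
      · obtain ⟨j, rfl⟩ := Nat.exists_eq_add_of_lt hqi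
        refine .inr (.inr (.inr ⟨(j + 1 : ℕ) / q',
          mem_crossingTimes.2 (.inr ⟨j + 1, by omega, by omega, rfl⟩), ?_⟩))
        rw [shiftCrossing_div_right hq'p' (by omega) (by omega), add_comm (j + 1) q, add_assoc]

theorem tumbleWord_add (hp : 0 < p) (hq' : 0 < q') (hdet : q * p' = p * q' + 1) :
    tumbleWord (p + p') (q + q') = tumbleWord p q ++ [Letter.r, Letter.u] ++ tumbleWord p' q' := by
  obtain ⟨hqp, hq'p', hba⟩ := coprime_of_det_eq_one hdet
  have hsort : (crossingTimes (p + p') (q + q')).sort (· ≤ ·) = mediantCrossings p q p' q' :=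
    (Finset.sortedLT_sort _).pairwise.eq_of_mem_iff (pairwise_mediantCrossings hp hq' hdet)
      fun t => by rw [Finset.mem_sort, mem_mediantCrossings hp hq' hdet]
  rw [tumbleWord_eq_map_sort, hsort, mediantCrossings, List.map_append, List.map_cons,
    List.map_cons, map_sort_shiftCrossing hqp hba (by omega),
    map_sort_shiftCrossing hq'p' hba (by omega), crossingLetter_div_self,
    crossingLetter_div_of_coprime hba (pos_of_det_eq_one hdet).1 (by omega)]
  simp

theorem tumbleWord_add' (hp : 0 < p) (hq' : 0 < q') (hdet : q * p' = p * q' + 1) :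
    tumbleWord (p + p') (q + q') = tumbleWord p' q' ++ [Letter.u, Letter.r] ++ tumbleWord p q := by
  conv_lhs => rw [← tumbleWord_reverse, tumbleWord_add hp hq' hdet]
  simp [tumbleWord_reverse]

end Mediant

def IsMediantTriple (s : (ℕ × ℕ) × (ℕ × ℕ) × (ℕ × ℕ)) : Prop :=
  s.1 = s.2.1 + s.2.2 ∧ s.2.1.2 * s.2.2.1 = s.2.1.1 * s.2.2.2 + 1

lemma IsMediantTriple.sbStep {s : (ℕ × ℕ) × (ℕ × ℕ) × (ℕ × ℕ)} (h : IsMediantTriple s)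
    (c : Bool) : IsMediantTriple (sbStep s c) := by
  obtain ⟨⟨a, b⟩, ⟨p, q⟩, ⟨p', q'⟩⟩ := s
  obtain ⟨hsum, hdet⟩ := h
  simp only [Prod.mk_add_mk, Prod.mk.injEq] at hsum hdet
  obtain ⟨rfl, rfl⟩ := hsum
  cases c
  · exact ⟨rfl, by simp only [_root_.sbStep]; linear_combination hdet⟩
  · exact ⟨add_comm _ _, by simp only [_root_.sbStep]; linear_combination hdet⟩

lemma isMediantTriple_sb (w : List Bool) : IsMediantTriple (sb w) := by
  suffices ∀ s, IsMediantTriple s → IsMediantTriple (w.foldl sbStep s) from this _ ⟨rfl, rfl⟩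
  induction w with
  | nil => exact fun _ h => h
  | cons c w ih => exact fun s h => ih _ (h.sbStep c)

/-- Tumble recurrence: if `t = g(w) = (a, b)` is a node of the Stern–Brocot tree with
`a ≥ 2` and `b ≥ 2` (so that its parents `t⁺ = g⁺(w)` and `t⁻ = g⁻(w)` are pairs of
coprime positive integers), then `τ(t) = τ(t⁺)·r·u·τ(t⁻) = τ(t⁻)·u·r·τ(t⁺)`. -/
theorem tumble_recurrence (w : List Bool) (ha : 2 ≤ (sb w).1.1)
    (hb : 2 ≤ (sb w).1.2) :
    tumbleWord (sb w).1.1 (sb w).1.2 =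
        tumbleWord (sb w).2.1.1 (sb w).2.1.2 ++ [Letter.r, Letter.u] ++
          tumbleWord (sb w).2.2.1 (sb w).2.2.2 ∧
      tumbleWord (sb w).1.1 (sb w).1.2 =
        tumbleWord (sb w).2.2.1 (sb w).2.2.2 ++ [Letter.u, Letter.r] ++
          tumbleWord (sb w).2.1.1 (sb w).2.1.2 := by
  have hsb := isMediantTriple_sb w
  generalize sb w = s at hsb ha hb ⊢
  obtain ⟨⟨a, b⟩, ⟨p, q⟩, ⟨p', q'⟩⟩ := s
  obtain ⟨hsum, hdet⟩ := hsb
  simp only [Prod.mk_add_mk, Prod.mk.injEq] at hsum hdet ha hb ⊢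
  obtain ⟨rfl, rfl⟩ := hsum
  have hp : 0 < p := Nat.pos_of_ne_zero fun hp => by simp_all
  have hq' : 0 < q' := Nat.pos_of_ne_zero fun hq' => by simp_all
  exact ⟨tumbleWord_add hp hq' hdet, tumbleWord_add' hp hq' hdet⟩
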